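/- arXiv:1103.4728 — 3 statements merged into one kernel-verified Lean document; each statement's English description precedes it below -/
import Mathlib

section
/- For every t > 0, x > 0 and ν > −1, the D-dimensional Bessel transition density integrates to one in its forward variable: ∫_0^∞ (1/t)·(y^{ν+1}/x^{ν})·e^{−(x²+y²)/(2t)}·I_ν(xy/t) dy = 1. -/
/-!
Expanding `I_ν` in its power series writes the Bessel density as a Poisson mixture of chi-type
densities: with `u = x² / (2t)`,
`p_t(y | x) = ∑ₙ e^{-u} uⁿ / n! · 2 y^{2s-1} e^{-y²/(2t)} / ((2t)^s Γ(s))`, `s = n + 1 + ν`.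
Each chi-type density integrates to one by the Gamma integral, and all terms are nonnegative, so
summation and integration commute and the total mass is `∑ₙ e^{-u} uⁿ / n! = 1`.
-/

open MeasureTheory Real Set

/-- The modified Bessel function of the first kind of order `ν`. -/
noncomputable def besselI (ν z : ℝ) : ℝ :=
  ∑' n : ℕ, (1 / (Real.Gamma ((n : ℝ) + 1) * Real.Gamma ((n : ℝ) + 1 + ν)))
      * (z / 2) ^ (2 * (n : ℝ) + ν)

lemma hasSum_exp_neg_mul_pow_div_factorial (u : ℝ) :
    HasSum (fun n : ℕ ↦ exp (-u) * (u ^ n / n.factorial)) 1 := by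
  have h := (NormedSpace.expSeries_div_hasSum_exp u).mul_left (exp (-u))
  rwa [← exp_eq_exp_ℝ, ← exp_add, neg_add_cancel, exp_zero] at h

lemma integral_tsum_mul_of_integral_eq_one {α ι : Type*} [MeasurableSpace α] [Countable ι]
    {μ : Measure α} {w : ι → ℝ} {f : ι → α → ℝ} (hw_nonneg : ∀ i, 0 ≤ w i) (hw : Summable w)
    (hf_int : ∀ i, Integrable (f i) μ) (hf_nonneg : ∀ i, 0 ≤ᵐ[μ] f i)
    (hf_one : ∀ i, ∫ a, f i a ∂μ = 1) :
    ∫ a, ∑' i, w i * f i a ∂μ = ∑' i, w i := by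
  have h_norm : ∀ i, ∫ a, ‖w i * f i a‖ ∂μ = w i := fun i ↦ by
    rw [integral_congr_ae ((hf_nonneg i).mono fun a ha ↦
        Real.norm_of_nonneg (mul_nonneg (hw_nonneg i) ha)),
      integral_const_mul, hf_one, mul_one]
  rw [← integral_tsum_of_summable_integral_norm (fun i ↦ (hf_int i).const_mul (w i))
    (by simpa only [h_norm] using hw)]
  simp only [integral_const_mul, hf_one, mul_one]

/-- The density of `√(2t G)` for `G ∼ Gamma(s, 1)`. -/
noncomputable def chiDensity (t s y : ℝ) : ℝ :=
  2 / ((2 * t) ^ s * Gamma s) * (y ^ (2 * s - 1) * exp (-(1 / (2 * t)) * y ^ 2))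

section chiDensity

variable {t s : ℝ}

lemma chiDensity_nonneg (ht : 0 < t) (hs : 0 < s) {y : ℝ} (hy : 0 ≤ y) :
    0 ≤ chiDensity t s y := by
  have := Gamma_pos_of_pos hs
  unfold chiDensity
  positivity

lemma integrableOn_chiDensity (ht : 0 < t) (hs : 0 < s) :
    IntegrableOn (chiDensity t s) (Ioi 0) :=
  (integrableOn_rpow_mul_exp_neg_mul_sq (by positivity) (by linarith)).const_mul _

lemma integral_chiDensity (ht : 0 < t) (hs : 0 < s) :
    ∫ y in Ioi 0, chiDensity t s y = 1 := by
  have hΓ := Gamma_pos_of_pos hs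
  have h2t : (0 : ℝ) < 2 * t := by positivity
  simp only [chiDensity, ← rpow_two]
  rw [integral_const_mul, integral_rpow_mul_exp_neg_mul_rpow two_pos (by linarith)
    (by positivity)]
  rw [show -(2 * s - 1 + 1) / 2 = -s by ring, show (2 * s - 1 + 1) / 2 = s by ring,
    one_div (2 * t), inv_rpow h2t.le,
    rpow_neg h2t.le, inv_inv]
  field_simp

end chiDensity

lemma besselDensity_eq_tsum {t x ν y : ℝ} (ht : 0 < t) (hx : 0 < x) (hν : -1 < ν) (hy : 0 < y) :
    (1 / t) * (y ^ (ν + 1) / x ^ ν) * exp (-(x ^ 2 + y ^ 2) / (2 * t)) * besselI ν (x * y / t)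
      = ∑' n : ℕ, exp (-(x ^ 2 / (2 * t))) * ((x ^ 2 / (2 * t)) ^ n / n.factorial)
          * chiDensity t ((n : ℝ) + 1 + ν) y := by
  rw [besselI, ← tsum_mul_left]
  refine tsum_congr fun n ↦ ?_
  have hΓ : 0 < Gamma ((n : ℝ) + 1 + ν) :=
    Gamma_pos_of_pos (by linarith [n.cast_nonneg (α := ℝ)])
  have h2t : (0 : ℝ) < 2 * t := by positivity
  have hxy : x * y / t / 2 = x * y / (2 * t) := by ring
  have hbessel : (x * y / (2 * t)) ^ (2 * (n : ℝ) + ν)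
      = (x * y / (2 * t)) ^ (2 * n) * (x ^ ν * y ^ ν / (2 * t) ^ ν) := by
    rw [rpow_add (by positivity), show (2 : ℝ) * n = (2 * n : ℕ) by push_cast; rfl,
      rpow_natCast, div_rpow (by positivity) h2t.le, mul_rpow hx.le hy.le]
  have hexp : exp (-(x ^ 2 + y ^ 2) / (2 * t))
      = exp (-(x ^ 2 / (2 * t))) * exp (-(1 / (2 * t)) * y ^ 2) := by
    rw [← exp_add]; ring_nf
  have hy_pow : y ^ (2 * ((n : ℝ) + 1 + ν) - 1) = y ^ (2 * n + 1) * y ^ ν * y ^ ν := by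
    rw [← rpow_natCast, ← rpow_add hy, ← rpow_add hy]; push_cast; ring_nf
  have h2t_pow : (2 * t) ^ ((n : ℝ) + 1 + ν) = (2 * t) ^ n * (2 * t) * (2 * t) ^ ν := by
    rw [rpow_add h2t, rpow_add_one h2t.ne', rpow_natCast]
  rw [chiDensity, Gamma_nat_eq_factorial, hxy, hbessel, rpow_add_one hy.ne', hexp,
    hy_pow, h2t_pow, div_pow, div_pow, mul_pow, ← pow_mul]
  field_simp
  ring

/-- For `t > 0`, `x > 0` and `ν > −1`, the Bessel transition density
integrates to one in its forward variable:
`∫_0^∞ (1/t)(y^{ν+1}/x^ν) e^{−(x²+y²)/(2t)} I_ν(xy/t) dy = 1`. -/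
theorem statement_4 (t x ν : ℝ) (ht : 0 < t) (hx : 0 < x) (hν : -1 < ν) :
    ∫ y in Set.Ioi (0 : ℝ),
        (1 / t) * (y ^ (ν + 1) / x ^ ν) * Real.exp (-(x ^ 2 + y ^ 2) / (2 * t))
          * besselI ν (x * y / t)
      = 1 := by
  have hs : ∀ n : ℕ, 0 < (n : ℝ) + 1 + ν := fun n ↦ by linarith [n.cast_nonneg (α := ℝ)]
  have hweights := hasSum_exp_neg_mul_pow_div_factorial (x ^ 2 / (2 * t))
  rw [setIntegral_congr_fun measurableSet_Ioi fun y hy ↦ besselDensity_eq_tsum ht hx hν hy,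
    integral_tsum_mul_of_integral_eq_one (fun n ↦ by positivity) hweights.summable
      (fun n ↦ integrableOn_chiDensity ht (hs n))
      (fun n ↦ (ae_restrict_iff' measurableSet_Ioi).2 <| .of_forall fun y hy ↦
        chiDensity_nonneg ht (hs n) (le_of_lt hy))
      (fun n ↦ integral_chiDensity ht (hs n)),
    hweights.tsum_eq]
end

section
/- For every N ≥ 1, the product of differences h_N(x) = ∏_{1 ≤ i < j ≤ N} (x_j − x_i), viewed as a polynomial function on ℝ^N, is harmonic: ∑_{i=1}^N ∂²h_N/∂x_i² (x) = 0 for all x ∈ ℝ^N. -/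
/-!
Write `h_N` as the evaluation of the Vandermonde polynomial `V = ∏_{i<j} (X_j - X_i)`, so that the
claim is `∑ᵢ ∂ᵢ²V = 0` in `ℝ[X_1, …, X_N]`. As `V ≠ 0` and `V` vanishes wherever two coordinates
agree, it is enough to show that `∑ᵢ ∂ᵢ²V` vanishes at points `y` with distinct coordinates. There
every factor of `V` is a nonzero linear form, and the logarithmic derivative gives
`∂ᵢ²V / V = (∑_{j≠i} wᵢⱼ)² - ∑_{j≠i} wᵢⱼ²` with `wᵢⱼ = (yᵢ - yⱼ)⁻¹`. Summed over `i`, this is the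
sum of `wᵢⱼ wᵢₖ` over triples of distinct indices, which vanishes because
`wᵢⱼ wᵢₖ + wⱼₖ wⱼᵢ + wₖᵢ wₖⱼ = 0`.
-/

/-- The product of differences (Vandermonde determinant)
`h_N(x) = ∏_{1 ≤ i < j ≤ N} (x_j − x_i)`. -/
noncomputable def prodDiff (N : ℕ) (x : Fin N → ℝ) : ℝ :=
  ∏ i : Fin N, ∏ j ∈ Finset.Ioi i, (x j - x i)

open MvPolynomial Finset

namespace MvPolynomial

variable {σ 𝕜 : Type*} [DecidableEq σ] [NontriviallyNormedField 𝕜]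

theorem hasDerivAt_eval_update (p : MvPolynomial σ 𝕜) (x : σ → 𝕜) (i : σ) (s : 𝕜) :
    HasDerivAt (fun t => eval (Function.update x i t) p)
      (eval (Function.update x i s) (pderiv i p)) s := by
  induction p using MvPolynomial.induction_on with
  | C a => simpa using hasDerivAt_const s a
  | add p q hp hq => simp only [map_add]; exact hp.add hq
  | mul_X p j hp =>
    obtain rfl | hj := eq_or_ne j i
    · simp only [map_mul, eval_X, Function.update_self]
      exact (hp.fun_mul (hasDerivAt_id' s)).congr_deriv (by simp; ring)
    · simpa [pderiv_mul, pderiv_X_of_ne hj, Function.update_of_ne hj, mul_comm]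
        using hp.mul_const (x j)

theorem deriv_deriv_eval_update (p : MvPolynomial σ 𝕜) (x : σ → 𝕜) (i : σ) :
    deriv (deriv fun s => eval (Function.update x i s) p) (x i)
      = eval x (pderiv i (pderiv i p)) := by
  have hderiv : deriv (fun s => eval (Function.update x i s) p)
      = fun s => eval (Function.update x i s) (pderiv i p) := by
    ext s; exact (hasDerivAt_eval_update p x i s).deriv
  rw [hderiv, (hasDerivAt_eval_update _ x i (x i)).deriv, Function.update_eq_self]

end MvPolynomial

namespace Finset

theorem sum_sum_erase_mul {ι R : Type*} [DecidableEq ι] [CommRing R] (s : Finset ι)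
    (u : ι → R) :
    ∑ p ∈ s, ∑ q ∈ s.erase p, u p * u q = (∑ p ∈ s, u p) ^ 2 - ∑ p ∈ s, u p ^ 2 := by
  rw [sq, sum_mul_sum, ← sum_sub_distrib]
  refine sum_congr rfl fun p hp => ?_
  rw [← sum_erase_add _ _ hp, sq]
  ring

theorem sum_sum_Ioi_eq_sum_erase {ι M : Type*} [Fintype ι] [LinearOrder ι]
    [LocallyFiniteOrderTop ι] [LocallyFiniteOrderBot ι] [AddCommMonoid M] (i : ι)
    (g : ι → ι → M) (hsymm : ∀ a b, g a b = g b a) (hg : ∀ a b, a ≠ i → b ≠ i → g a b = 0) :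
    ∑ a, ∑ b ∈ Ioi a, g a b = ∑ j ∈ univ.erase i, g i j := by
  have hrow : ∀ a, ∑ b ∈ Ioi a, g a b
      = (if a = i then ∑ b ∈ Ioi i, g i b else 0) + if a < i then g i a else 0 := by
    intro a
    obtain rfl | ha := eq_or_ne a i
    · simp
    rw [if_neg ha, zero_add]
    split_ifs with hai
    · rw [sum_eq_single i (fun b _ hb => hg a b ha hb) fun hi => absurd (mem_Ioi.mpr hai) hi,
        hsymm]
    · refine sum_eq_zero fun b hb => hg a b ha ?_
      exact ((not_lt.mp hai).trans_lt (mem_Ioi.mp hb)).ne'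
  rw [sum_congr rfl fun a _ => hrow a, sum_add_distrib, sum_ite_eq', if_pos (mem_univ i),
    ← sum_filter, filter_gt_eq_Iio, ← compl_singleton, ← Ioi_disjUnion_Iio i, sum_disjUnion]

theorem sum_sum_sum_eq_zero_of_cyclic {ι M : Type*} [Fintype ι] [AddCommMonoid M]
    [IsAddTorsionFree M] (f : ι → ι → ι → M) (hf : ∀ i j k, f i j k + f j k i + f k i j = 0) :
    ∑ i, ∑ j, ∑ k, f i j k = 0 := by
  have hrot₁ : ∑ i, ∑ j, ∑ k, f j k i = ∑ i, ∑ j, ∑ k, f i j k := by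
    rw [sum_comm]
    exact sum_congr rfl fun _ _ => sum_comm
  have hrot₂ : ∑ i, ∑ j, ∑ k, f k i j = ∑ i, ∑ j, ∑ k, f i j k := by
    rw [← hrot₁, sum_comm]
    exact sum_congr rfl fun _ _ => sum_comm
  have hsum : ∑ i, ∑ j, ∑ k, (f i j k + f j k i + f k i j) = 0 := by
    simp only [hf, sum_const_zero]
  simp only [sum_add_distrib] at hsum
  rw [hrot₁, hrot₂, ← three'_nsmul] at hsum
  exact (nsmul_eq_zero_iff_right three_ne_zero).mp hsum

end Finset

namespace Derivation

variable {ι R A : Type*} [DecidableEq ι] [CommSemiring R] [CommSemiring A] [Algebra R A]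
  (D : Derivation R A A)

theorem leibniz_finset_prod (s : Finset ι) (f : ι → A) :
    D (∏ p ∈ s, f p) = ∑ p ∈ s, (∏ q ∈ s.erase p, f q) * D (f p) := by
  induction s using Finset.induction_on with
  | empty => simp
  | insert a s ha ih =>
    rw [prod_insert ha, leibniz, ih, sum_insert ha, erase_insert ha, smul_eq_mul, smul_eq_mul,
      mul_sum, add_comm]
    congr 1
    refine sum_congr rfl fun p hp => ?_
    rw [erase_insert_of_ne (ne_of_mem_of_not_mem hp ha).symm,
      prod_insert fun h => ha (mem_of_mem_erase h)]
    ring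

theorem apply_apply_finset_prod (s : Finset ι) (f : ι → A) (hf : ∀ p ∈ s, D (D (f p)) = 0) :
    D (D (∏ p ∈ s, f p)) = ∑ p ∈ s, ∑ q ∈ s.erase p,
      (∏ m ∈ (s.erase p).erase q, f m) * D (f q) * D (f p) := by
  rw [leibniz_finset_prod, map_sum]
  refine sum_congr rfl fun p hp => ?_
  rw [leibniz, hf p hp, smul_zero, zero_add, leibniz_finset_prod, smul_eq_mul, mul_sum]
  exact sum_congr rfl fun q _ => by ring

theorem map_apply_apply_finset_prod {K : Type*} [Field K] (φ : A →+* K) (s : Finset ι)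
    (f : ι → A) (hf : ∀ p ∈ s, D (D (f p)) = 0) (hφ : ∀ p ∈ s, φ (f p) ≠ 0) :
    φ (D (D (∏ p ∈ s, f p))) = φ (∏ p ∈ s, f p) *
      ((∑ p ∈ s, φ (D (f p)) / φ (f p)) ^ 2 - ∑ p ∈ s, (φ (D (f p)) / φ (f p)) ^ 2) := by
  rw [← sum_sum_erase_mul, mul_sum, apply_apply_finset_prod D s f hf, map_sum]
  refine sum_congr rfl fun p hp => ?_
  rw [mul_sum, map_sum]
  refine sum_congr rfl fun q hq => ?_
  rw [← prod_erase_mul _ _ hp, ← prod_erase_mul _ _ hq]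
  simp only [map_mul, map_prod]
  field_simp [hφ p hp, hφ q (mem_of_mem_erase hq)]

end Derivation

section Vandermonde

variable {K : Type*} [Field K]

theorem inv_sub_mul_inv_sub_add_cyclic {a b c : K} (hab : a ≠ b) (hbc : b ≠ c) (hca : c ≠ a) :
    (a - b)⁻¹ * (a - c)⁻¹ + (b - c)⁻¹ * (b - a)⁻¹ + (c - a)⁻¹ * (c - b)⁻¹ = 0 := by
  rw [← neg_sub a b, ← neg_sub a c, ← neg_sub b c]
  have := sub_ne_zero.mpr hab
  have := sub_ne_zero.mpr hbc
  have := sub_ne_zero.mpr hca.symm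
  field_simp
  ring

theorem sum_sq_sum_inv_sub_eq_sum_sum_inv_sub_sq {ι : Type*} [Fintype ι] [DecidableEq ι]
    [CharZero K] {y : ι → K} (hy : Function.Injective y) :
    ∑ i, (∑ j ∈ univ.erase i, (y i - y j)⁻¹) ^ 2
      = ∑ i, ∑ j ∈ univ.erase i, ((y i - y j)⁻¹) ^ 2 := by
  set G : ι → ι → ι → K := fun i j k =>
    if j ≠ i ∧ k ≠ i ∧ k ≠ j then (y i - y j)⁻¹ * (y i - y k)⁻¹ else 0
  have hG : ∀ i, (∑ j ∈ univ.erase i, (y i - y j)⁻¹) ^ 2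
      - ∑ j ∈ univ.erase i, ((y i - y j)⁻¹) ^ 2 = ∑ j, ∑ k, G i j k := by
    intro i
    rw [← sum_sum_erase_mul]
    simp only [G, ← filter_ne', sum_filter]
    refine sum_congr rfl fun j _ => ?_
    split_ifs with hj <;> simp [hj, ite_and]
  rw [← sub_eq_zero, ← sum_sub_distrib, sum_congr rfl fun i _ => hG i]
  refine sum_sum_sum_eq_zero_of_cyclic G fun i j k => ?_
  by_cases h : j ≠ i ∧ k ≠ i ∧ k ≠ j
  · obtain ⟨hji, hki, hkj⟩ := h
    simp only [G, if_pos (⟨hji, hki, hkj⟩ : j ≠ i ∧ k ≠ i ∧ k ≠ j),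
      if_pos (⟨hkj, hji.symm, hki.symm⟩ : k ≠ j ∧ i ≠ j ∧ i ≠ k),
      if_pos (⟨hki.symm, hkj.symm, hji⟩ : i ≠ k ∧ j ≠ k ∧ j ≠ i)]
    exact inv_sub_mul_inv_sub_add_cyclic (hy.ne hji.symm) (hy.ne hkj.symm) (hy.ne hki)
  · simp only [G, if_neg h, if_neg (by tauto : ¬(k ≠ j ∧ i ≠ j ∧ i ≠ k)),
      if_neg (by tauto : ¬(i ≠ k ∧ j ≠ k ∧ j ≠ i)), add_zero]

noncomputable def vandermondePoly (N : ℕ) (R : Type*) [CommRing R] : MvPolynomial (Fin N) R :=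
  ∏ i, ∏ j ∈ Ioi i, (X j - X i)

variable {N : ℕ}

theorem eval_vandermondePoly (y : Fin N → K) :
    eval y (vandermondePoly N K) = ∏ i, ∏ j ∈ Ioi i, (y j - y i) := by
  simp [vandermondePoly, map_prod]

theorem eval_vandermondePoly_eq_zero_iff {y : Fin N → K} :
    eval y (vandermondePoly N K) = 0 ↔ ¬ Function.Injective y := by
  rw [eval_vandermondePoly, ← Matrix.det_vandermonde, ← Matrix.det_vandermonde_ne_zero_iff,
    not_not]

theorem vandermondePoly_ne_zero [CharZero K] : vandermondePoly N K ≠ 0 := fun h => by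
  have hinj : Function.Injective fun k : Fin N => (k : K) :=
    Nat.cast_injective.comp Fin.val_injective
  simpa [h] using eval_vandermondePoly_eq_zero_iff.not.mpr (not_not.mpr hinj)

theorem eval_pderiv_pderiv_vandermondePoly {y : Fin N → K} (hy : Function.Injective y)
    (i : Fin N) :
    eval y (pderiv i (pderiv i (vandermondePoly N K))) = eval y (vandermondePoly N K) *
      ((∑ j ∈ univ.erase i, (y i - y j)⁻¹) ^ 2 - ∑ j ∈ univ.erase i, ((y i - y j)⁻¹) ^ 2) := by
  -- `v a b` is the logarithmic `∂ᵢ`-derivative of the factor `X b - X a` at `y`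
  set v : Fin N → Fin N → K := fun a b => eval y (pderiv i (X b - X a)) / eval y (X b - X a)
  have hv_symm : ∀ a b, v a b = v b a := fun a b => by
    simp only [v, ← neg_sub (X a), map_neg, neg_div_neg_eq]
  have hv_zero : ∀ a b, a ≠ i → b ≠ i → v a b = 0 := fun a b ha hb => by
    simp only [v, map_sub, pderiv_X_of_ne ha, pderiv_X_of_ne hb, sub_zero, map_zero, zero_div]
  have hv_self : ∀ j ∈ univ.erase i, v i j = (y i - y j)⁻¹ := fun j hj => by
    simp only [v, map_sub, pderiv_X_of_ne (ne_of_mem_erase hj), pderiv_X_self, eval_X, map_one,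
      map_zero, zero_sub]
    rw [neg_div, ← div_neg, neg_sub, one_div]
  have hV : vandermondePoly N K = ∏ p ∈ univ.sigma fun a : Fin N => Ioi a, (X p.2 - X p.1) :=
    prod_sigma' _ _ fun a b => (X b - X a : MvPolynomial (Fin N) K)
  have hlin : ∀ p ∈ univ.sigma fun a : Fin N => Ioi a,
      pderiv i (pderiv i (X p.2 - X p.1 : MvPolynomial (Fin N) K)) = 0 := fun p _ => by
    simp only [map_sub, pderiv_X, Pi.single_apply]
    split_ifs <;> simp
  have hne : ∀ p ∈ univ.sigma fun a : Fin N => Ioi a, eval y (X p.2 - X p.1) ≠ 0 := fun p hp => by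
    simpa [sub_eq_zero] using hy.ne (mem_Ioi.mp (mem_sigma.mp hp).2).ne'
  have hsum : ∀ φ : K → K, φ 0 = 0 → ∑ p ∈ univ.sigma (fun a => Ioi a), φ (v p.1 p.2)
      = ∑ j ∈ univ.erase i, φ (y i - y j)⁻¹ := fun φ hφ => by
    rw [← sum_sigma' univ (fun a => Ioi a) fun a b => φ (v a b),
      sum_sum_Ioi_eq_sum_erase i _ (fun a b => by rw [hv_symm]) fun a b ha hb => by
        rw [hv_zero a b ha hb, hφ]]
    exact sum_congr rfl fun j hj => by rw [hv_self j hj]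
  have hsum₁ := hsum id rfl
  have hsum₂ := hsum (· ^ 2) (zero_pow two_ne_zero)
  simp only [id, v] at hsum₁ hsum₂
  rw [hV, Derivation.map_apply_apply_finset_prod _ _ _ _ hlin hne, hsum₁, hsum₂]

theorem sum_pderiv_pderiv_vandermondePoly [CharZero K] :
    ∑ i, pderiv i (pderiv i (vandermondePoly N K)) = 0 := by
  refine (mul_eq_zero.mp (MvPolynomial.funext fun y => ?_)).resolve_right vandermondePoly_ne_zero
  rw [map_mul, map_zero, mul_eq_zero, eval_vandermondePoly_eq_zero_iff, or_iff_not_imp_right,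
    not_not]
  intro hy
  rw [map_sum, sum_congr rfl fun i _ => eval_pderiv_pderiv_vandermondePoly hy i, ← mul_sum,
    sum_sub_distrib, sum_sq_sum_inv_sub_eq_sum_sum_inv_sub_sq hy, sub_self, mul_zero]

end Vandermonde

theorem statement_9_general (N : ℕ) (x : Fin N → ℝ) :
    ∑ i : Fin N, deriv (deriv (fun s : ℝ => prodDiff N (Function.update x i s))) (x i) = 0 := by
  have hV : ∀ y, prodDiff N y = eval y (vandermondePoly N ℝ) := fun y =>
    (eval_vandermondePoly y).symm
  simp_rw [hV, deriv_deriv_eval_update, ← map_sum, sum_pderiv_pderiv_vandermondePoly, map_zero]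

/-- For every `N ≥ 1`, the product of differences
`h_N(x) = ∏_{1 ≤ i < j ≤ N} (x_j − x_i)` is harmonic on `ℝ^N`:
`∑_{i=1}^N ∂²h_N/∂x_i²(x) = 0`. -/
theorem statement_9 (N : ℕ) (hN : 1 ≤ N) (x : Fin N → ℝ) :
    ∑ i : Fin N, deriv (deriv (fun s : ℝ => prodDiff N (Function.update x i s))) (x i) = 0 :=
  statement_9_general N x
end

section
/- (Ishikawa–Okada–Tagawa–Zeng determinant identity) Let n ≥ 2 and let x, y, a, b ∈ ℂ^n with x_i ≠ y_j for all i, j. Then det_{1≤i,j≤n}[ (b_j − a_i)/(y_j − x_i) ] = ((−1)^{n(n−1)/2} / ∏_{i=1}^n ∏_{j=1}^n (y_j − x_i)) · det M, where M is the 2n × 2n matrix whose first n rows are (1, x_i, …, x_i^{n−1}, a_i, a_i x_i, …, a_i x_i^{n−1}) for i = 1,…,n and whose last n rows are (1, y_j, …, y_j^{n−1}, b_j, b_j y_j, …, b_j y_j^{n−1}) for j = 1,…,n. -/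
open Matrix Polynomial Finset

lemma det_fromBlocks_zero₁₁' {R : Type*} [CommRing R] {n : ℕ}
    (B C D : Matrix (Fin n) (Fin n) R) :
    (Matrix.fromBlocks 0 B C D).det = (-1 : R) ^ n * B.det * C.det := by
  have hJ : (Matrix.fromBlocks 1 1 0 1 : Matrix (Fin n ⊕ Fin n) (Fin n ⊕ Fin n) R)
      * (Matrix.fromBlocks 1 0 (-1) 1 : Matrix (Fin n ⊕ Fin n) (Fin n ⊕ Fin n) R)
      * (Matrix.fromBlocks 1 1 0 1 : Matrix (Fin n ⊕ Fin n) (Fin n ⊕ Fin n) R)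
      = Matrix.fromBlocks 0 1 (-1) 0 := by
    simp [Matrix.fromBlocks_multiply]
  have hdetJ : ((Matrix.fromBlocks 0 1 (-1) 0 : Matrix (Fin n ⊕ Fin n) (Fin n ⊕ Fin n) R)).det = 1 := by
    rw [← hJ, Matrix.det_mul, Matrix.det_mul]
    simp [Matrix.det_fromBlocks_zero₂₁, Matrix.det_fromBlocks_zero₁₂]
  have hmul : (Matrix.fromBlocks 0 1 (-1) 0 : Matrix (Fin n ⊕ Fin n) (Fin n ⊕ Fin n) R)
      * Matrix.fromBlocks 0 B C D = Matrix.fromBlocks C D 0 (-B) := by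
    simp [Matrix.fromBlocks_multiply]
  calc (Matrix.fromBlocks 0 B C D).det
      = ((Matrix.fromBlocks 0 1 (-1) 0 : Matrix (Fin n ⊕ Fin n) (Fin n ⊕ Fin n) R)).det
        * (Matrix.fromBlocks 0 B C D).det := by rw [hdetJ, one_mul]
    _ = (Matrix.fromBlocks C D 0 (-B)).det := by rw [← Matrix.det_mul, hmul]
    _ = C.det * (-B).det := Matrix.det_fromBlocks_zero₂₁ _ _ _
    _ = (-1 : R) ^ n * B.det * C.det := by
        rw [Matrix.det_neg]; simp [mul_comm, mul_assoc, mul_left_comm]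

lemma key_identity {F : Type*} [Field F] {n : ℕ} (x y a b : Fin n → F)
    (hy : Function.Injective y) :
    (Matrix.of fun i j : Fin n =>
        (b j - a i) * ∏ l ∈ Finset.univ.erase j, (y l - x i)).det
      = (-1 : F) ^ (n * (n - 1) / 2) * (Matrix.fromBlocks
            (Matrix.of fun i j : Fin n => x i ^ (j : ℕ))
            (Matrix.of fun i j : Fin n => a i * x i ^ (j : ℕ))
            (Matrix.of fun i j : Fin n => y i ^ (j : ℕ))
            (Matrix.of fun i j : Fin n => b i * y i ^ (j : ℕ))).det := by
  classical
  set s := n * (n - 1) / 2 with hs_def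
  set d : Fin n → F := fun j => ∏ l ∈ Finset.univ.erase j, (y j - y l) with hd_def
  have hd : ∀ j, d j ≠ 0 := by
    intro j
    refine Finset.prod_ne_zero_iff.2 fun l hl => sub_ne_zero.2 fun h => ?_
    exact (Finset.mem_erase.1 hl).1 (hy h).symm
  set P : Matrix (Fin n) (Fin n) F :=
    Matrix.of (fun i j : Fin n => (b j - a i) * ∏ l ∈ Finset.univ.erase j, (y l - x i))
    with hP_def
  set E : Matrix (Fin n) (Fin n) F :=
    Matrix.of (fun k j : Fin n => (∏ l ∈ Finset.univ.erase j, (X - C (y l))).coeff k)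
    with hE_def
  set Fx : Matrix (Fin n) (Fin n) F :=
    Matrix.of (fun i j : Fin n => ∏ l ∈ Finset.univ.erase j, (x i - y l)) with hFx_def
  -- Vandermonde times coefficient matrix gives evaluations
  have hVE : ∀ z : Fin n → F,
      Matrix.vandermonde z * E
        = Matrix.of (fun i j : Fin n => ∏ l ∈ Finset.univ.erase j, (z i - y l)) := by
    intro z
    ext i j
    have hdeg : (∏ l ∈ Finset.univ.erase j, (X - C (y l))).natDegree < n := by
      rw [Polynomial.natDegree_prod _ _ (fun l _ => Polynomial.X_sub_C_ne_zero (y l))]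
      simp only [Polynomial.natDegree_X_sub_C, Finset.sum_const, smul_eq_mul, mul_one,
        Finset.card_erase_of_mem (Finset.mem_univ j), Finset.card_univ, Fintype.card_fin]
      exact Nat.sub_lt j.pos one_pos
    have hev := Polynomial.eval_eq_sum_range' hdeg (z i)
    rw [Polynomial.eval_prod] at hev
    simp only [Polynomial.eval_sub, Polynomial.eval_X, Polynomial.eval_C] at hev
    rw [Matrix.mul_apply]
    simp only [Matrix.vandermonde_apply, hE_def, Matrix.of_apply]
    rw [hev, Finset.sum_range]
    exact Finset.sum_congr rfl fun k _ => mul_comm _ _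
  have hFy : Matrix.of (fun i j : Fin n => ∏ l ∈ Finset.univ.erase j, (y i - y l))
      = Matrix.diagonal d := by
    ext i j
    rcases eq_or_ne i j with rfl | hij
    · simp [hd_def]
    · rw [Matrix.of_apply, Matrix.diagonal_apply_ne _ hij]
      exact Finset.prod_eq_zero (Finset.mem_erase.2 ⟨hij, Finset.mem_univ i⟩) (sub_self _)
  -- rewrite statement blocks via vandermonde
  have hAa : (Matrix.of fun i j : Fin n => a i * x i ^ (j : ℕ))
      = Matrix.diagonal a * Matrix.vandermonde x := by
    ext i j; rw [Matrix.diagonal_mul]; rfl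
  have hBb : (Matrix.of fun i j : Fin n => b i * y i ^ (j : ℕ))
      = Matrix.diagonal b * Matrix.vandermonde y := by
    ext i j; rw [Matrix.diagonal_mul]; rfl
  set M : Matrix (Fin n ⊕ Fin n) (Fin n ⊕ Fin n) F :=
    Matrix.fromBlocks (Matrix.vandermonde x) (Matrix.diagonal a * Matrix.vandermonde x)
      (Matrix.vandermonde y) (Matrix.diagonal b * Matrix.vandermonde y) with hM_def
  have hMeq : Matrix.fromBlocks
            (Matrix.of fun i j : Fin n => x i ^ (j : ℕ))
            (Matrix.of fun i j : Fin n => a i * x i ^ (j : ℕ))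
            (Matrix.of fun i j : Fin n => y i ^ (j : ℕ))
            (Matrix.of fun i j : Fin n => b i * y i ^ (j : ℕ)) = M := by
    rw [hM_def, hAa, hBb]; rfl
  -- step 1 : column operations
  have h1 : M * Matrix.fromBlocks E 0 0 E
      = Matrix.fromBlocks Fx (Matrix.diagonal a * Fx) (Matrix.diagonal d)
          (Matrix.diagonal fun j => b j * d j) := by
    rw [hM_def, Matrix.fromBlocks_multiply]
    simp only [Matrix.mul_zero, Matrix.zero_mul, add_zero, zero_add]
    rw [Matrix.mul_assoc, Matrix.mul_assoc, hVE x, hVE y, hFy,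
      Matrix.diagonal_mul_diagonal]
  -- step 2 : row operations
  set N : Matrix (Fin n) (Fin n) F := -(Fx * Matrix.diagonal fun j => (d j)⁻¹) with hN_def
  set B0 : Matrix (Fin n) (Fin n) F := Matrix.diagonal a * Fx - Fx * Matrix.diagonal b
    with hB0_def
  have h2 : (Matrix.fromBlocks 1 N 0 1 : Matrix (Fin n ⊕ Fin n) (Fin n ⊕ Fin n) F)
      * Matrix.fromBlocks Fx (Matrix.diagonal a * Fx) (Matrix.diagonal d)
          (Matrix.diagonal fun j => b j * d j)
      = Matrix.fromBlocks 0 B0 (Matrix.diagonal d) (Matrix.diagonal fun j => b j * d j) := by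
    have hNd : N * Matrix.diagonal d = -Fx := by
      rw [hN_def, Matrix.neg_mul, Matrix.mul_assoc, Matrix.diagonal_mul_diagonal]
      have h1' : (fun j => (d j)⁻¹ * d j) = fun _ => (1 : F) :=
        funext fun j => inv_mul_cancel₀ (hd j)
      rw [h1', Matrix.diagonal_one, Matrix.mul_one]
    have hNbd : N * Matrix.diagonal (fun j => b j * d j) = -(Fx * Matrix.diagonal b) := by
      rw [hN_def, Matrix.neg_mul, Matrix.mul_assoc, Matrix.diagonal_mul_diagonal]
      have h1' : (fun j => (d j)⁻¹ * (b j * d j)) = b := funext fun j => by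
        rw [mul_comm (b j) (d j), ← mul_assoc, inv_mul_cancel₀ (hd j), one_mul]
      rw [h1']
    rw [Matrix.fromBlocks_multiply]
    simp only [Matrix.one_mul, Matrix.zero_mul, zero_add, add_zero, hNd, hNbd]
    rw [hB0_def, add_neg_cancel, ← sub_eq_add_neg]
  -- determinant computation
  have hdetstep : M.det * (E.det * E.det) = (-1 : F) ^ n * B0.det * ∏ j, d j := by
    calc M.det * (E.det * E.det)
        = M.det * (Matrix.fromBlocks E 0 0 E : Matrix (Fin n ⊕ Fin n) (Fin n ⊕ Fin n) F).det := by
          rw [Matrix.det_fromBlocks_zero₁₂]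
      _ = (M * Matrix.fromBlocks E 0 0 E).det := (Matrix.det_mul _ _).symm
      _ = (Matrix.fromBlocks Fx (Matrix.diagonal a * Fx) (Matrix.diagonal d)
            (Matrix.diagonal fun j => b j * d j)).det := by rw [h1]
      _ = ((Matrix.fromBlocks 1 N 0 1 : Matrix (Fin n ⊕ Fin n) (Fin n ⊕ Fin n) F)
            * Matrix.fromBlocks Fx (Matrix.diagonal a * Fx) (Matrix.diagonal d)
              (Matrix.diagonal fun j => b j * d j)).det := by
          rw [Matrix.det_mul, Matrix.det_fromBlocks_zero₂₁, Matrix.det_one, one_mul, one_mul]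
      _ = (Matrix.fromBlocks 0 B0 (Matrix.diagonal d)
            (Matrix.diagonal fun j => b j * d j)).det := by rw [h2]
      _ = (-1 : F) ^ n * B0.det * (Matrix.diagonal d).det := det_fromBlocks_zero₁₁' _ _ _
      _ = (-1 : F) ^ n * B0.det * ∏ j, d j := by rw [Matrix.det_diagonal]
  -- B0 in terms of P
  have hB0P : B0 = ((-1 : F) ^ n) • P := by
    ext i j
    have hn1 : n - 1 + 1 = n := Nat.succ_pred_eq_of_pos i.pos
    have hcard : (Finset.univ.erase j).card = n - 1 := by
      rw [Finset.card_erase_of_mem (Finset.mem_univ j), Finset.card_univ, Fintype.card_fin]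
    have hprod : ∏ l ∈ Finset.univ.erase j, (x i - y l)
        = (-1 : F) ^ (n - 1) * ∏ l ∈ Finset.univ.erase j, (y l - x i) := by
      calc ∏ l ∈ Finset.univ.erase j, (x i - y l)
          = ∏ l ∈ Finset.univ.erase j, (-1 : F) * (y l - x i) :=
            Finset.prod_congr rfl fun l _ => by ring
        _ = (∏ _l ∈ Finset.univ.erase j, (-1 : F)) * ∏ l ∈ Finset.univ.erase j, (y l - x i) :=
            Finset.prod_mul_distrib
        _ = (-1 : F) ^ (n - 1) * ∏ l ∈ Finset.univ.erase j, (y l - x i) := by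
            rw [Finset.prod_const, hcard]
    rw [hB0_def, hP_def]
    simp only [hFx_def, Matrix.sub_apply, Matrix.smul_apply, Matrix.of_apply,
      Matrix.diagonal_mul, Matrix.mul_diagonal, smul_eq_mul]
    rw [hprod]
    have hpow : (-1 : F) ^ n = (-1 : F) ^ (n - 1) * (-1) := by rw [← pow_succ, hn1]
    rw [hpow]; ring
  -- determinant of the Vandermonde relation
  have hB : (Matrix.vandermonde y).det * E.det = ∏ j, d j := by
    rw [← Matrix.det_mul, hVE y, hFy, Matrix.det_diagonal]
  -- ∏ d in terms of the Vandermonde determinant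
  have hsplit : ∀ j : Fin n, d j
      = (∏ l ∈ Finset.Ioi j, (y j - y l)) * ∏ l ∈ Finset.Iio j, (y j - y l) := by
    intro j
    have huniv : Finset.univ.erase j
        = (Finset.Ioi j).disjUnion (Finset.Iio j) (Finset.disjoint_Ioi_Iio j) := by
      ext l
      simp only [Finset.mem_erase, Finset.mem_univ, and_true, Finset.mem_disjUnion,
        Finset.mem_Ioi, Finset.mem_Iio]
      constructor
      · intro h; exact Or.symm (lt_or_gt_of_ne h)
      · rintro (h | h)
        exacts [ne_of_gt h, ne_of_lt h]
    rw [hd_def]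
    dsimp only
    rw [huniv, Finset.prod_disjUnion]
  have hPart1 : ∏ j, ∏ l ∈ Finset.Iio j, (y j - y l) = (Matrix.vandermonde y).det := by
    rw [Matrix.det_vandermonde]
    exact Finset.prod_comm' (by simp)
  have hcardsum : ∑ j : Fin n, (Finset.Ioi j).card = s := by
    have h1' : ∀ j : Fin n, (Finset.Ioi j).card = ∑ l ∈ Finset.Ioi j, 1 :=
      fun j => (Finset.card_eq_sum_ones _)
    rw [Finset.sum_congr rfl fun j _ => h1' j]
    rw [Finset.sum_comm' (s' := fun l => Finset.Iio l) (t' := Finset.univ) (by simp)]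
    simp only [Finset.sum_const, smul_eq_mul, mul_one, Fin.card_Iio]
    rw [Fin.sum_univ_eq_sum_range (fun l => l) n, Finset.sum_range_id, hs_def]
  have hPart2 : ∏ j, ∏ l ∈ Finset.Ioi j, (y j - y l)
      = (-1 : F) ^ s * (Matrix.vandermonde y).det := by
    have hflip : ∀ j : Fin n, ∏ l ∈ Finset.Ioi j, (y j - y l)
        = (-1 : F) ^ (Finset.Ioi j).card * ∏ l ∈ Finset.Ioi j, (y l - y j) := by
      intro j
      calc ∏ l ∈ Finset.Ioi j, (y j - y l)
          = ∏ l ∈ Finset.Ioi j, (-1 : F) * (y l - y j) :=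
            Finset.prod_congr rfl fun l _ => by ring
        _ = (∏ _l ∈ Finset.Ioi j, (-1 : F)) * ∏ l ∈ Finset.Ioi j, (y l - y j) :=
            Finset.prod_mul_distrib
        _ = (-1 : F) ^ (Finset.Ioi j).card * ∏ l ∈ Finset.Ioi j, (y l - y j) := by
            rw [Finset.prod_const]
    rw [Finset.prod_congr rfl fun j _ => hflip j, Finset.prod_mul_distrib,
      Finset.prod_pow_eq_pow_sum, hcardsum, Matrix.det_vandermonde]
  have hC : ∏ j, d j = (-1 : F) ^ s * ((Matrix.vandermonde y).det) ^ 2 := by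
    rw [Finset.prod_congr rfl fun j _ => hsplit j, Finset.prod_mul_distrib, hPart1, hPart2]
    ring
  -- put everything together
  have hPd : (∏ j, d j) ≠ 0 := Finset.prod_ne_zero_iff.2 fun j _ => hd j
  have hss : (-1 : F) ^ s * (-1 : F) ^ s = 1 := by
    rw [← pow_add]; exact Even.neg_one_pow ⟨s, rfl⟩
  have hV2 : (Matrix.vandermonde y).det * (Matrix.vandermonde y).det
      = (-1 : F) ^ s * ∏ j, d j := by
    rw [hC, ← mul_assoc, hss, one_mul, sq]
  have hE2 : E.det * E.det = (-1 : F) ^ s * ∏ j, d j := by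
    have hsq : ((-1 : F) ^ s * ∏ j, d j) * (E.det * E.det) = (∏ j, d j) * ∏ j, d j := by
      rw [← hV2, ← hB]; ring
    refine mul_left_cancel₀ hPd ?_
    calc (∏ j, d j) * (E.det * E.det)
        = (-1 : F) ^ s * (((-1 : F) ^ s * ∏ j, d j) * (E.det * E.det)) := by
          linear_combination (-(∏ j, d j) * (E.det * E.det)) * hss
      _ = (-1 : F) ^ s * ((∏ j, d j) * ∏ j, d j) := by rw [hsq]
      _ = (∏ j, d j) * ((-1 : F) ^ s * ∏ j, d j) := by ring
  have heps : (-1 : F) ^ n * ((-1 : F) ^ n) ^ n = 1 := by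
    rw [← pow_succ', ← pow_mul]
    exact Even.neg_one_pow (Nat.even_mul_succ_self n)
  have hB0det : B0.det = ((-1 : F) ^ n) ^ n * P.det := by
    rw [hB0P, Matrix.det_smul, Fintype.card_fin]
  have hmain : P.det * ∏ j, d j = ((-1 : F) ^ s * M.det) * ∏ j, d j := by
    have h4 : M.det * (E.det * E.det) = (-1 : F) ^ n * (((-1:F)^n)^n * P.det) * ∏ j, d j := by
      rw [hdetstep, hB0det]
    rw [hE2] at h4
    calc P.det * ∏ j, d j
        = ((-1:F)^n * ((-1:F)^n)^n) * (P.det * ∏ j, d j) := by rw [heps, one_mul]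
      _ = (-1 : F) ^ n * (((-1:F)^n)^n * P.det) * ∏ j, d j := by ring
      _ = M.det * ((-1:F)^s * ∏ j, d j) := by rw [← h4]
      _ = ((-1 : F) ^ s * M.det) * ∏ j, d j := by ring
  have hfin := mul_right_cancel₀ hPd hmain
  rw [hMeq]
  exact hfin

abbrev IOTZVar (n : ℕ) : Type := (Fin n ⊕ Fin n) ⊕ (Fin n ⊕ Fin n)
abbrev IOTZRing (n : ℕ) : Type := MvPolynomial (IOTZVar n) ℂ
abbrev IOTZField (n : ℕ) : Type := FractionRing (IOTZRing n)

noncomputable def xv {n : ℕ} (i : Fin n) : IOTZRing n := MvPolynomial.X (Sum.inl (Sum.inl i))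
noncomputable def av {n : ℕ} (i : Fin n) : IOTZRing n := MvPolynomial.X (Sum.inl (Sum.inr i))
noncomputable def yv {n : ℕ} (i : Fin n) : IOTZRing n := MvPolynomial.X (Sum.inr (Sum.inl i))
noncomputable def bv {n : ℕ} (i : Fin n) : IOTZRing n := MvPolynomial.X (Sum.inr (Sum.inr i))

/-- The polynomial version of the identity, over the multivariate polynomial ring. -/
lemma key_identity_poly (n : ℕ) :
    (Matrix.of (fun i j : Fin n =>
        (bv j - av i) * ∏ l ∈ Finset.univ.erase j, (yv l - xv i))).det
      = (-1 : IOTZRing n) ^ (n * (n - 1) / 2) * (Matrix.fromBlocks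
            (Matrix.of fun i j : Fin n => xv i ^ (j : ℕ))
            (Matrix.of fun i j : Fin n => av i * xv i ^ (j : ℕ))
            (Matrix.of fun i j : Fin n => yv i ^ (j : ℕ))
            (Matrix.of fun i j : Fin n => bv i * yv i ^ (j : ℕ))).det := by
  classical
  set f : IOTZRing n →+* IOTZField n := algebraMap (IOTZRing n) (IOTZField n) with hf
  have hinj : Function.Injective f := IsFractionRing.injective (IOTZRing n) (IOTZField n)
  have hyinj : Function.Injective (fun i : Fin n => f (yv i)) := by
    intro i j h
    have h2 : (yv i : IOTZRing n) = yv j := hinj h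
    exact Sum.inl_injective (Sum.inr_injective (MvPolynomial.X_injective h2))
  have hkey := key_identity (fun i : Fin n => f (xv i)) (fun i => f (yv i))
    (fun i => f (av i)) (fun i => f (bv i)) hyinj
  have hL : (Matrix.of fun i j : Fin n => (f (bv j) - f (av i))
        * ∏ l ∈ Finset.univ.erase j, (f (yv l) - f (xv i))).det
      = f (Matrix.of (fun i j : Fin n =>
          (bv j - av i) * ∏ l ∈ Finset.univ.erase j, (yv l - xv i))).det := by
    rw [RingHom.map_det]
    congr 1
    ext i j
    simp [RingHom.mapMatrix_apply, Matrix.map_apply, _root_.map_sub, _root_.map_mul,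
      _root_.map_prod]
  have hM : (Matrix.fromBlocks
          (Matrix.of fun i j : Fin n => f (xv i) ^ (j : ℕ))
          (Matrix.of fun i j : Fin n => f (av i) * f (xv i) ^ (j : ℕ))
          (Matrix.of fun i j : Fin n => f (yv i) ^ (j : ℕ))
          (Matrix.of fun i j : Fin n => f (bv i) * f (yv i) ^ (j : ℕ))).det
      = f (Matrix.fromBlocks
            (Matrix.of fun i j : Fin n => xv i ^ (j : ℕ))
            (Matrix.of fun i j : Fin n => av i * xv i ^ (j : ℕ))
            (Matrix.of fun i j : Fin n => yv i ^ (j : ℕ))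
            (Matrix.of fun i j : Fin n => bv i * yv i ^ (j : ℕ))).det := by
    rw [RingHom.map_det]
    congr 1
    ext i j
    rcases i with i | i <;> rcases j with j | j <;>
      simp [RingHom.mapMatrix_apply, Matrix.map_apply, _root_.map_mul, _root_.map_pow]
  apply hinj
  rw [_root_.map_mul, _root_.map_pow, _root_.map_neg, _root_.map_one, ← hL, ← hM]
  exact hkey

/-- **Ishikawa–Okada–Tagawa–Zeng determinant identity.**
For `n ≥ 2` and `x, y, a, b ∈ ℂ^n` with `x_i ≠ y_j` for all `i, j`:
`det_{1≤i,j≤n}[(b_j − a_i)/(y_j − x_i)]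
  = ((−1)^{n(n−1)/2}/∏_{i,j}(y_j − x_i)) · det M`,
where `M` is the `2n × 2n` matrix whose first `n` rows are
`(1, x_i, …, x_i^{n−1}, a_i, a_i x_i, …, a_i x_i^{n−1})` and whose last `n` rows are
`(1, y_j, …, y_j^{n−1}, b_j, b_j y_j, …, b_j y_j^{n−1})`. -/
theorem statement_15 (n : ℕ) (hn : 2 ≤ n) (x y a b : Fin n → ℂ)
    (hxy : ∀ i j, x i ≠ y j) :
    Matrix.det (Matrix.of fun i j : Fin n => (b j - a i) / (y j - x i))
      = ((-1 : ℂ) ^ (n * (n - 1) / 2) / ∏ i : Fin n, ∏ j : Fin n, (y j - x i))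
        * Matrix.det (Matrix.fromBlocks
            (Matrix.of fun i j : Fin n => x i ^ (j : ℕ))
            (Matrix.of fun i j : Fin n => a i * x i ^ (j : ℕ))
            (Matrix.of fun i j : Fin n => y i ^ (j : ℕ))
            (Matrix.of fun i j : Fin n => b i * y i ^ (j : ℕ))) := by
  classical
  set s := n * (n - 1) / 2 with hs_def
  -- Step 1: the polynomial identity over ℂ (no distinctness assumption on y) obtained
  -- by specializing the identity over the fraction field of a polynomial ring.
  have hPM : (Matrix.of fun i j : Fin n =>
        (b j - a i) * ∏ l ∈ Finset.univ.erase j, (y l - x i)).det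
      = (-1 : ℂ) ^ s * (Matrix.fromBlocks
            (Matrix.of fun i j : Fin n => x i ^ (j : ℕ))
            (Matrix.of fun i j : Fin n => a i * x i ^ (j : ℕ))
            (Matrix.of fun i j : Fin n => y i ^ (j : ℕ))
            (Matrix.of fun i j : Fin n => b i * y i ^ (j : ℕ))).det := by
    have hReq := key_identity_poly n
    set v : IOTZVar n → ℂ := Sum.elim (Sum.elim x a) (Sum.elim y b) with hv
    set φ : IOTZRing n →+* ℂ := (MvPolynomial.aeval v).toRingHom with hφ
    have h5 := congrArg φ hReq
    rw [_root_.map_mul, _root_.map_pow, _root_.map_neg, _root_.map_one,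
      RingHom.map_det, RingHom.map_det] at h5
    have hPmap : φ.mapMatrix (Matrix.of (fun i j : Fin n =>
        (bv j - av i) * ∏ l ∈ Finset.univ.erase j, (yv l - xv i)))
        = Matrix.of (fun i j : Fin n =>
          (b j - a i) * ∏ l ∈ Finset.univ.erase j, (y l - x i)) := by
      ext i j
      simp [RingHom.mapMatrix_apply, Matrix.map_apply, _root_.map_sub, _root_.map_mul,
        _root_.map_prod, hφ, hv, xv, av, yv, bv]
    have hMmap : φ.mapMatrix (Matrix.fromBlocks
            (Matrix.of fun i j : Fin n => xv i ^ (j : ℕ))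
            (Matrix.of fun i j : Fin n => av i * xv i ^ (j : ℕ))
            (Matrix.of fun i j : Fin n => yv i ^ (j : ℕ))
            (Matrix.of fun i j : Fin n => bv i * yv i ^ (j : ℕ)))
        = Matrix.fromBlocks
            (Matrix.of fun i j : Fin n => x i ^ (j : ℕ))
            (Matrix.of fun i j : Fin n => a i * x i ^ (j : ℕ))
            (Matrix.of fun i j : Fin n => y i ^ (j : ℕ))
            (Matrix.of fun i j : Fin n => b i * y i ^ (j : ℕ)) := by
      ext i j
      rcases i with i | i <;> rcases j with j | j <;>
        simp [RingHom.mapMatrix_apply, Matrix.map_apply, _root_.map_mul, _root_.map_pow,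
          hφ, hv, xv, av, yv, bv]
    rw [hPmap, hMmap] at h5
    exact h5
  -- Step 2: factor out the row denominators
  have hne : ∀ i j, y j - x i ≠ 0 := fun i j => sub_ne_zero.2 fun h => hxy i j h.symm
  have hrow : ∀ i, (∏ j, (y j - x i)) ≠ 0 :=
    fun i => Finset.prod_ne_zero_iff.2 fun j _ => hne i j
  have hCP : (Matrix.of fun i j : Fin n => (b j - a i) / (y j - x i))
      = Matrix.diagonal (fun i => (∏ j, (y j - x i))⁻¹)
        * Matrix.of (fun i j : Fin n =>
            (b j - a i) * ∏ l ∈ Finset.univ.erase j, (y l - x i)) := by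
    ext i j
    rw [Matrix.diagonal_mul, Matrix.of_apply, Matrix.of_apply]
    have hsplit : ∏ j', (y j' - x i)
        = (y j - x i) * ∏ l ∈ Finset.univ.erase j, (y l - x i) :=
      (Finset.mul_prod_erase _ _ (Finset.mem_univ j)).symm
    have hprodne : (∏ l ∈ Finset.univ.erase j, (y l - x i)) ≠ 0 :=
      Finset.prod_ne_zero_iff.2 fun l _ => hne i l
    rw [hsplit, mul_inv, div_eq_mul_inv]
    calc (b j - a i) * (y j - x i)⁻¹
        = (b j - a i) * (y j - x i)⁻¹ * ((∏ l ∈ Finset.univ.erase j, (y l - x i))⁻¹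
            * ∏ l ∈ Finset.univ.erase j, (y l - x i)) := by
          rw [inv_mul_cancel₀ hprodne, mul_one]
      _ = (y j - x i)⁻¹ * (∏ l ∈ Finset.univ.erase j, (y l - x i))⁻¹
            * ((b j - a i) * ∏ l ∈ Finset.univ.erase j, (y l - x i)) := by ring
  rw [hCP, Matrix.det_mul, Matrix.det_diagonal, hPM]
  rw [Finset.prod_inv_distrib, div_eq_mul_inv]
  ring
end
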